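/- arXiv:2311.10428 — 11 statements merged into one kernel-verified Lean document; each statement's English description precedes it below -/
import Mathlib

section
/- For any prime number p, the ℤ-module ℤ/pℤ ⊕ ℤ/pℤ is weakly uniserial but not uniserial. -/
def IsWeaklyUniserial (R M : Type*) [Ring R] [AddCommGroup M] [Module R M] : Prop :=
  ∀ N K : Submodule R M,
    (∃ f : N →ₗ[R] K, Function.Injective f) ∨ (∃ f : K →ₗ[R] N, Function.Injective f)

theorem stmt_0 (p : ℕ) (hp : p.Prime) :
    IsWeaklyUniserial ℤ (ZMod p × ZMod p) ∧
      ¬ (∀ N K : Submodule ℤ (ZMod p × ZMod p), N ≤ K ∨ K ≤ N) := by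
  have := Fact.mk hp
  have hcardM : Nat.card (ZMod p × ZMod p) = p ^ 2 := by
    simp [Nat.card_prod, Nat.card_zmod, sq]
  -- every submodule has card 1, p, or p^2
  have hcard : ∀ N : Submodule ℤ (ZMod p × ZMod p),
      Nat.card N = 1 ∨ Nat.card N = p ∨ Nat.card N = p ^ 2 := by
    intro N
    have hdvd : Nat.card N ∣ p ^ 2 := by
      rw [← hcardM]
      exact AddSubgroup.card_addSubgroup_dvd_card N.toAddSubgroup
    rcases (Nat.dvd_prime_pow hp).mp hdvd with ⟨i, hi, heq⟩
    interval_cases i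
    · left; simpa using heq
    · right; left; simpa using heq
    · right; right; exact heq
  have htop : ∀ N : Submodule ℤ (ZMod p × ZMod p), Nat.card N = p ^ 2 → N = ⊤ := by
    intro N hN
    have : N.toAddSubgroup = ⊤ := by
      apply AddSubgroup.eq_top_of_card_eq
      rw [hcardM]; exact hN
    ext x
    simp only [Submodule.mem_top, iff_true]
    have : x ∈ N.toAddSubgroup := this ▸ AddSubgroup.mem_top x
    exact this
  constructor
  · intro N K
    rcases hcard N with hN | hN | hN
    · left
      have : Subsingleton N := Nat.card_eq_one_iff_unique.mp hN |>.1
      exact ⟨0, fun a b _ => Subsingleton.elim a b⟩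
    · rcases hcard K with hK | hK | hK
      · right
        have : Subsingleton K := Nat.card_eq_one_iff_unique.mp hK |>.1
        exact ⟨0, fun a b _ => Subsingleton.elim a b⟩
      · left
        have e : N ≃+ K := addEquivOfPrimeCardEq hN hK
        exact ⟨e.toIntLinearEquiv.toLinearMap, e.toIntLinearEquiv.injective⟩
      · left
        have hKtop := htop K hK
        exact ⟨Submodule.inclusion (hKtop ▸ le_top),
          Submodule.inclusion_injective _⟩
    · right
      have hNtop := htop N hN
      exact ⟨Submodule.inclusion (hNtop ▸ le_top),
        Submodule.inclusion_injective _⟩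
  · intro h
    have h1 : (1 : ZMod p) ≠ 0 := one_ne_zero
    rcases h (Submodule.span ℤ {((1 : ZMod p), (0 : ZMod p))})
        (Submodule.span ℤ {((0 : ZMod p), (1 : ZMod p))}) with hle | hle
    · have : ((1 : ZMod p), (0 : ZMod p)) ∈
          Submodule.span ℤ {((0 : ZMod p), (1 : ZMod p))} :=
        hle (Submodule.mem_span_singleton_self _)
      rcases Submodule.mem_span_singleton.mp this with ⟨n, hn⟩
      have := congrArg Prod.fst hn
      simp at this
    · have : ((0 : ZMod p), (1 : ZMod p)) ∈
          Submodule.span ℤ {((1 : ZMod p), (0 : ZMod p))} :=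
        hle (Submodule.mem_span_singleton_self _)
      rcases Submodule.mem_span_singleton.mp this with ⟨n, hn⟩
      have := congrArg Prod.snd hn
      simp at this
end

section
/- If R is a right weakly uniserial ring, then R has no nontrivial central idempotents: every central idempotent e of R satisfies e = 0 or e = 1. -/
def IsRightWeaklyUniserialRing (R : Type*) [Ring R] : Prop :=
  ∀ I J : Submodule Rᵐᵒᵖ R,
    (∃ f : I →ₗ[Rᵐᵒᵖ] J, Function.Injective f) ∨ (∃ f : J →ₗ[Rᵐᵒᵖ] I, Function.Injective f)

theorem stmt_3 {R : Type*} [Ring R] (h : IsRightWeaklyUniserialRing R)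
    (e : R) (he : IsIdempotentElem e) (hc : ∀ x : R, e * x = x * e) :
    e = 0 ∨ e = 1 := by
  set I := Submodule.span Rᵐᵒᵖ ({e} : Set R) with hI
  set J := Submodule.span Rᵐᵒᵖ ({1 - e} : Set R) with hJ
  have hIe : ∀ x ∈ I, x * e = x := by
    intro x hx
    rw [hI, Submodule.mem_span_singleton] at hx
    obtain ⟨a, rfl⟩ := hx
    show e * a.unop * e = e * a.unop
    rw [mul_assoc, ← hc, ← mul_assoc, he]
  have hJe : ∀ x ∈ J, x * e = 0 := by
    intro x hx
    rw [hJ, Submodule.mem_span_singleton] at hx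
    obtain ⟨a, rfl⟩ := hx
    show (1 - e) * a.unop * e = 0
    rw [mul_assoc, ← hc, ← mul_assoc, sub_mul, one_mul, he, sub_self, zero_mul]
  have hJf : ∀ x ∈ J, x * (1 - e) = x := by
    intro x hx
    rw [mul_sub, mul_one, hJe x hx, sub_zero]
  have hIf : ∀ x ∈ I, x * (1 - e) = 0 := by
    intro x hx
    rw [mul_sub, mul_one, hIe x hx, sub_self]
  rcases h I J with ⟨f, hf⟩ | ⟨f, hf⟩
  · left
    have hez : ∀ x : I, x = 0 := by
      intro x
      have hx : x = MulOpposite.op e • x := by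
        ext
        show (x : R) = (x : R) * e
        exact (hIe x.1 x.2).symm
      have h2 : f x = MulOpposite.op e • f x := by
        conv_lhs => rw [hx, map_smul]
      have h0 : f x = 0 := by
        ext
        have h3 : (f x : R) = (f x : R) * e := congrArg Subtype.val h2
        rw [hJe (f x).1 (f x).2] at h3
        exact h3
      apply hf
      rw [h0, map_zero]
    have := hez ⟨e, Submodule.mem_span_singleton_self e⟩
    exact congrArg Subtype.val this
  · right
    have hez : ∀ x : J, x = 0 := by
      intro x
      have hx : x = MulOpposite.op (1 - e) • x := by
        ext
        show (x : R) = (x : R) * (1 - e)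
        exact (hJf x.1 x.2).symm
      have h2 : f x = MulOpposite.op (1 - e) • f x := by
        conv_lhs => rw [hx, map_smul]
      have h0 : f x = 0 := by
        ext
        have h3 : (f x : R) = (f x : R) * (1 - e) := congrArg Subtype.val h2
        rw [hIf (f x).1 (f x).2] at h3
        exact h3
      apply hf
      rw [h0, map_zero]
    have := hez ⟨1 - e, Submodule.mem_span_singleton_self _⟩
    have h1 : (1 : R) - e = 0 := congrArg Subtype.val this
    exact (sub_eq_zero.mp h1).symm
end

section
/- If R is a ring in which every nonzero right ideal contains a right regular element (an element a with right annihilator zero), then R is a right weakly uniserial ring. -/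
theorem stmt_5 {R : Type*} [Ring R]
    (h : ∀ I : Submodule Rᵐᵒᵖ R, I ≠ ⊥ → ∃ a ∈ I, ∀ r : R, a * r = 0 → r = 0) :
    IsRightWeaklyUniserialRing R := by
  intro I J
  by_cases hI : I = ⊥
  · left
    subst hI
    exact ⟨0, fun x y _ => Subsingleton.elim x y⟩
  · right
    obtain ⟨a, haI, hreg⟩ := h I hI
    refine ⟨{ toFun := fun x => ⟨a * (x : R), ?_⟩
              map_add' := ?_
              map_smul' := ?_ }, ?_⟩
    · have := I.smul_mem (MulOpposite.op (x : R)) haI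
      simpa [MulOpposite.smul_eq_mul_unop] using this
    · intro x y; ext; simp [mul_add]
    · intro r x; ext; simp [MulOpposite.smul_eq_mul_unop, mul_assoc]
    · intro x y hxy
      have h1 : a * (x : R) = a * (y : R) := congrArg Subtype.val hxy
      have h2 : a * ((x : R) - (y : R)) = 0 := by rw [mul_sub, h1, sub_self]
      have := hreg _ h2
      exact Subtype.ext (sub_eq_zero.mp this)
end

section
/- If R is a commutative principal ideal domain and R is local (has a unique maximal ideal), then the field of fractions Q of R is a uniserial R-module, i.e., the R-submodules of Q are linearly ordered by inclusion. -/
theorem stmt_8 {R : Type*} [CommRing R] [IsDomain R] [IsPrincipalIdealRing R]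
    [IsLocalRing R] :
    ∀ N K : Submodule R (FractionRing R), N ≤ K ∨ K ≤ N := by
  have key : ∀ x y : FractionRing R, (∃ c : R, c • y = x) ∨ (∃ c : R, c • x = y) := by
    intro x y
    rcases eq_or_ne y 0 with rfl | hy
    · exact Or.inr ⟨0, by simp⟩
    rcases ValuationRing.isInteger_or_isInteger R (x / y) with ⟨a, ha⟩ | ⟨a, ha⟩
    · exact Or.inl ⟨a, by rw [Algebra.smul_def, ha]; field_simp⟩
    · rcases eq_or_ne x 0 with rfl | hx
      · exact Or.inl ⟨0, by simp⟩
      · refine Or.inr ⟨a, ?_⟩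
        rw [inv_div] at ha
        rw [Algebra.smul_def, ha]; field_simp
  intro N K
  by_cases h : N ≤ K
  · exact Or.inl h
  · right
    obtain ⟨x, hxN, hxK⟩ := Set.not_subset.mp h
    intro y hyK
    rcases key x y with ⟨c, hc⟩ | ⟨c, hc⟩
    · exact absurd (hc ▸ K.smul_mem c hyK) hxK
    · exact hc ▸ N.smul_mem c hxN
end

section
/- ℚ is not a weakly uniserial ℤ-module. -/
/-!
A ℤ-linear map `f : ℤ[1/p] → ℚ` is multiplication by `c = f 1`, so an embedding
`ℤ[1/p] → ℤ[1/q]` would put `c / p ^ k` into `ℤ[1/q]` for every `k`. When `p` and `q` are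
coprime this forces `p ^ k ∣ c.num` for every `k`, hence `c = 0`, contradicting injectivity.
Taking `p, q = 2, 3` and `3, 2`, neither of `ℤ[1/2]`, `ℤ[1/3]` embeds into the other.
-/

/-- The subgroup `ℤ[1/p]` of `ℚ`. -/
def awaySubmodule (p : ℕ) : Submodule ℤ ℚ where
  carrier := {x | ∃ (a : ℤ) (n : ℕ), x * (p : ℚ) ^ n = a}
  zero_mem' := ⟨0, 0, by simp⟩
  add_mem' := by
    rintro x y ⟨a, n, ha⟩ ⟨b, m, hb⟩
    refine ⟨a * (p : ℤ) ^ m + b * (p : ℤ) ^ n, n + m, ?_⟩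
    push_cast
    linear_combination (p : ℚ) ^ m * ha + (p : ℚ) ^ n * hb
  smul_mem' := by
    rintro z x ⟨a, n, ha⟩
    refine ⟨z * a, n, ?_⟩
    push_cast [zsmul_eq_mul]
    linear_combination (z : ℚ) * ha

lemma one_mem_awaySubmodule (p : ℕ) : (1 : ℚ) ∈ awaySubmodule p :=
  ⟨1, 0, by simp⟩

lemma inv_pow_mem_awaySubmodule {p : ℕ} (hp : p ≠ 0) (k : ℕ) :
    ((p : ℚ) ^ k)⁻¹ ∈ awaySubmodule p :=
  ⟨1, k, by simp [hp]⟩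

lemma pow_dvd_num_pow_mul_of_mem_awaySubmodule {p q : ℕ} (hpq : p.Coprime q) (k : ℕ) {x : ℚ}
    (hx : x ∈ awaySubmodule q) : (p : ℤ) ^ k ∣ ((p : ℚ) ^ k * x).num := by
  obtain ⟨a, m, ham⟩ := hx
  set c := (p : ℚ) ^ k * x
  have hc : c.num * (q : ℤ) ^ m = (p : ℤ) ^ k * (a * c.den) := by
    have : (c.num : ℚ) * (q : ℚ) ^ m = (p : ℚ) ^ k * (a * c.den) := by
      rw [← Rat.mul_den_eq_num, ← ham]
      ring
    exact_mod_cast this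
  have hcop : IsCoprime ((p : ℤ) ^ k) ((q : ℤ) ^ m) :=
    (Nat.isCoprime_iff_coprime.mpr hpq).pow
  exact hcop.dvd_of_dvd_mul_right ⟨_, hc⟩

lemma Int.eq_zero_of_forall_pow_dvd {p n : ℤ} (hp : p.natAbs ≠ 1) (h : ∀ k : ℕ, p ^ k ∣ n) :
    n = 0 := by
  by_contra hn
  obtain ⟨k, hk⟩ := Int.finiteMultiplicity_iff.mpr ⟨hp, hn⟩
  exact hk (h (k + 1))

lemma not_exists_injective_awaySubmodule {p q : ℕ} (hp : 2 ≤ p) (hpq : p.Coprime q) :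
    ¬ ∃ f : awaySubmodule p →ₗ[ℤ] awaySubmodule q, Function.Injective f := by
  rintro ⟨f, hf⟩
  set one : awaySubmodule p := ⟨1, one_mem_awaySubmodule p⟩
  have hc : (f one : ℚ) ≠ 0 := by
    rw [Ne, ZeroMemClass.coe_eq_zero, ← map_zero f, hf.eq_iff]
    exact fun h => one_ne_zero (congrArg Subtype.val h : (1 : ℚ) = 0)
  have hdvd (k : ℕ) : (p : ℤ) ^ k ∣ (f one : ℚ).num := by
    let e : awaySubmodule p := ⟨_, inv_pow_mem_awaySubmodule (by omega) k⟩
    have he : ((p : ℤ) ^ k) • e = one := by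
      ext
      simp [e, one, zsmul_eq_mul, show (p : ℚ) ≠ 0 by positivity]
    have hfe : (f one : ℚ) = (p : ℚ) ^ k * f e := by
      rw [← he, map_smul]
      push_cast [zsmul_eq_mul]
      rfl
    rw [hfe]
    exact pow_dvd_num_pow_mul_of_mem_awaySubmodule hpq k (f e).2
  have hp1 : (p : ℤ).natAbs ≠ 1 := by omega
  exact hc (Rat.num_eq_zero.mp (Int.eq_zero_of_forall_pow_dvd hp1 hdvd))

theorem stmt_10 : ¬ IsWeaklyUniserial ℤ ℚ := by
  intro h
  rcases h (awaySubmodule 2) (awaySubmodule 3) with h23 | h32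
  · exact not_exists_injective_awaySubmodule le_rfl (by norm_num) h23
  · exact not_exists_injective_awaySubmodule (by norm_num) (by norm_num) h32
end

section
/- A semisimple right R-module M is weakly uniserial if and only if it is homogeneous semisimple, i.e., all its simple submodules are pairwise isomorphic. -/
/-- An injective linear map between simple modules is an isomorphism. -/
lemma aux_equiv_of_injective {R A B : Type*} [Ring R] [AddCommGroup A] [AddCommGroup B]
    [Module R A] [Module R B] [IsSimpleModule R A] [IsSimpleModule R B]
    (f : A →ₗ[R] B) (hf : Function.Injective f) : Nonempty (A ≃ₗ[R] B) := by
  have := IsSimpleModule.nontrivial R A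
  have hr : LinearMap.range f ≠ ⊥ := by
    intro h
    rw [LinearMap.range_eq_bot] at h
    obtain ⟨a, ha⟩ := exists_ne (0 : A)
    exact ha (hf (by simp [h]))
  have : LinearMap.range f = ⊤ := (eq_bot_or_eq_top _).resolve_left hr
  exact ⟨LinearEquiv.ofBijective f ⟨hf, LinearMap.range_eq_top.mp this⟩⟩

/-- Every submodule of a semisimple module all of whose simple submodules are
isomorphic to `S` is isomorphic to a direct sum of copies of `S`. -/
lemma aux_exists_finsupp {R M : Type*} [Ring R] [AddCommGroup M] [Module R M]
    [IsSemisimpleModule R M] (S : Submodule R M)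
    (h : ∀ T : Submodule R M, IsSimpleModule R T → Nonempty (T ≃ₗ[R] S))
    (N : Submodule R M) : ∃ ι : Set (Submodule R N), Nonempty (N ≃ₗ[R] (ι →₀ S)) := by
  classical
  obtain ⟨s, hind, hsup, hsimple⟩ :=
    IsSemisimpleModule.exists_sSupIndep_sSup_simples_eq_top (R := R) (M := N)
  refine ⟨s, ?_⟩
  have hInternal : DirectSum.IsInternal (fun i : s => (i : Submodule R N)) := by
    apply DirectSum.isInternal_submodule_of_iSupIndep_of_iSup_eq_top
    · exact (sSupIndep_iff s).mp hind
    · rw [← sSup_eq_iSup']; exact hsup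
  have e1 : (DirectSum s fun i : s => (i : Submodule R N)) ≃ₗ[R] N :=
    LinearEquiv.ofBijective (DirectSum.coeLinearMap _) hInternal
  have e2 : ∀ i : s, ((i : Submodule R N) : Type _) ≃ₗ[R] S := by
    intro i
    have hsi : IsSimpleModule R (i : Submodule R N) := hsimple i i.2
    have hmap : IsSimpleModule R ((i : Submodule R N).map N.subtype) :=
      IsSimpleModule.congr
        ((i : Submodule R N).equivMapOfInjective N.subtype N.injective_subtype).symm
    exact ((i : Submodule R N).equivMapOfInjective N.subtype N.injective_subtype).trans
      (h _ hmap).some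
  have e3 : (DirectSum s fun i : s => (i : Submodule R N)) ≃ₗ[R] (DirectSum s fun _ : s => S) :=
    DFinsupp.mapRange.linearEquiv e2
  have e4 : ((s : Type _) →₀ S) ≃ₗ[R] (DirectSum s fun _ : s => S) := finsuppLEquivDirectSum R S s
  exact ⟨e1.symm.trans (e3.trans e4.symm)⟩

theorem stmt_11 {R M : Type*} [Ring R] [AddCommGroup M] [Module R M]
    [IsSemisimpleModule R M] :
    IsWeaklyUniserial R M ↔
      ∀ S T : Submodule R M, IsSimpleModule R ↥S → IsSimpleModule R ↥T →
        Nonempty (↥S ≃ₗ[R] ↥T) := by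
  constructor
  · intro hw S T hS hT
    rcases hw S T with ⟨f, hf⟩ | ⟨f, hf⟩
    · exact aux_equiv_of_injective f hf
    · exact ⟨(aux_equiv_of_injective f hf).some.symm⟩
  · intro h N K
    by_cases hex : ∃ S : Submodule R M, IsSimpleModule R S
    · obtain ⟨S, hS⟩ := hex
      have h' : ∀ T : Submodule R M, IsSimpleModule R T → Nonempty (T ≃ₗ[R] S) :=
        fun T hT => h T S hT hS
      obtain ⟨ι, ⟨eN⟩⟩ := aux_exists_finsupp S h' N
      obtain ⟨κ, ⟨eK⟩⟩ := aux_exists_finsupp S h' K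
      rcases Function.Embedding.total ↥ι ↥κ with ⟨⟨emb⟩⟩ | ⟨⟨emb⟩⟩
      · left
        refine ⟨eK.symm.toLinearMap ∘ₗ (Finsupp.lmapDomain S R emb) ∘ₗ eN.toLinearMap, ?_⟩
        exact eK.symm.injective.comp
          ((Finsupp.mapDomain_injective emb.injective).comp eN.injective)
      · right
        refine ⟨eN.symm.toLinearMap ∘ₗ (Finsupp.lmapDomain S R emb) ∘ₗ eK.toLinearMap, ?_⟩
        exact eN.symm.injective.comp
          ((Finsupp.mapDomain_injective emb.injective).comp eK.injective)
    · -- no simple submodules: M is trivial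
      have : (⊤ : Submodule R M) = ⊥ := by
        have := IsSemisimpleModule.sSup_simples_eq_top R M
        rw [show {m : Submodule R M | IsSimpleModule R m} = ∅ from
          Set.eq_empty_iff_forall_notMem.mpr (fun m hm => hex ⟨m, hm⟩)] at this
        simpa using this.symm
      have : Subsingleton M := by
        constructor; intro a b
        have ha : a ∈ (⊥ : Submodule R M) := this ▸ Submodule.mem_top
        have hb : b ∈ (⊥ : Submodule R M) := this ▸ Submodule.mem_top
        simp_all
      left
      refine ⟨0, fun a b _ => ?_⟩
      exact Subtype.ext (Subsingleton.elim _ _)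
end

section
/- Let M be a weakly uniserial right R-module. If N and K are submodules of M that are prime modules, then Ann_R(N) = Ann_R(K). Consequently, M has at most one associated prime. -/
/-- A submodule $N ⊆ M$ is a prime module if $N ≠ 0$ and every nonzero submodule of $N$
has the same annihilator as $N$. -/
def IsPrimeSubmodule {R M : Type*} [Ring R] [AddCommGroup M] [Module R M]
    (N : Submodule R M) : Prop :=
  N ≠ ⊥ ∧ ∀ N' : Submodule R M, N' ≤ N → N' ≠ ⊥ →
    Module.annihilator R ↥N' = Module.annihilator R ↥N

private lemma ann_range_eq {R M : Type*} [Ring R] [AddCommGroup M] [Module R M]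
    (N K : Submodule R M) (f : ↥N →ₗ[R] ↥K) (hf : Function.Injective f) :
    Module.annihilator R ↥((LinearMap.range f).map K.subtype) = Module.annihilator R ↥N := by
  ext r
  simp only [Module.mem_annihilator]
  constructor
  · intro hr n
    have hmem : ((f n : M)) ∈ (LinearMap.range f).map K.subtype :=
      ⟨f n, ⟨n, rfl⟩, rfl⟩
    have := hr ⟨(f n : M), hmem⟩
    have h0 : (r • (f n) : ↥K) = 0 := by
      ext
      exact congrArg Subtype.val this |>.trans rfl
    have : f (r • n) = 0 := by rw [map_smul]; exact h0
    exact hf (by rw [this, map_zero])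
  · intro hr m
    obtain ⟨x, hx⟩ := m
    obtain ⟨y, ⟨n, hn⟩, hy⟩ := hx
    ext
    show r • x = 0
    have : r • x = ((f (r • n) : M)) := by
      rw [map_smul]
      subst hn
      rw [← hy]
      rfl
    rw [this, hr n, map_zero]
    rfl

private lemma ann_le {R M : Type*} [Ring R] [AddCommGroup M] [Module R M]
    (N K : Submodule R M) (hN : IsPrimeSubmodule N) (hK : IsPrimeSubmodule K)
    (f : ↥N →ₗ[R] ↥K) (hf : Function.Injective f) :
    Module.annihilator R ↥N = Module.annihilator R ↥K := by
  set N' := (LinearMap.range f).map K.subtype with hN'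
  have hle : N' ≤ K := Submodule.map_subtype_le _ _
  have hne : N' ≠ ⊥ := by
    intro hbot
    obtain ⟨n, hn, hn0⟩ := Submodule.exists_mem_ne_zero_of_ne_bot hN.1
    have hmem : ((f ⟨n, hn⟩ : M)) ∈ N' := ⟨f ⟨n, hn⟩, ⟨⟨n, hn⟩, rfl⟩, rfl⟩
    rw [hbot] at hmem
    simp only [Submodule.mem_bot] at hmem
    have : f ⟨n, hn⟩ = 0 := by ext; exact hmem
    have := hf (by rw [this, map_zero] : f ⟨n, hn⟩ = f 0)
    exact hn0 (congrArg Subtype.val this)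
  rw [← ann_range_eq N K f hf, ← hN', hK.2 N' hle hne]

theorem stmt_14 {R M : Type*} [Ring R] [AddCommGroup M] [Module R M]
    (h : IsWeaklyUniserial R M) :
    (∀ N K : Submodule R M, IsPrimeSubmodule N → IsPrimeSubmodule K →
        Module.annihilator R ↥N = Module.annihilator R ↥K) ∧
      {P : Ideal R | ∃ N : Submodule R M, IsPrimeSubmodule N ∧
        P = Module.annihilator R ↥N}.Subsingleton := by
  have main : ∀ N K : Submodule R M, IsPrimeSubmodule N → IsPrimeSubmodule K →
      Module.annihilator R ↥N = Module.annihilator R ↥K := by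
    intro N K hN hK
    rcases h N K with ⟨f, hf⟩ | ⟨f, hf⟩
    · exact ann_le N K hN hK f hf
    · exact (ann_le K N hK hN f hf).symm
  refine ⟨main, ?_⟩
  rintro P ⟨N, hN, rfl⟩ Q ⟨K, hK, rfl⟩
  exact main N K hN hK
end

section
/- Let R be a commutative ring and M a weakly uniserial R-module. If M is semiprime (the annihilator of every nonzero submodule is a semiprime/radical ideal), then M is weakly prime (the annihilator of every nonzero submodule is a prime ideal). -/
lemma ann_iff' {R M : Type*} [CommRing R] [AddCommGroup M] [Module R M]
    (N : Submodule R M) (r : R) :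
    r ∈ Module.annihilator R ↥N ↔ ∀ x ∈ N, r • x = 0 := by
  rw [Module.mem_annihilator]
  constructor
  · intro h x hx
    simpa using congrArg Subtype.val (h ⟨x, hx⟩)
  · intro h m
    exact Subtype.ext (by simpa using h m m.2)

theorem stmt_15 {R M : Type*} [CommRing R] [AddCommGroup M] [Module R M]
    (h : IsWeaklyUniserial R M)
    (hsp : ∀ N : Submodule R M, N ≠ ⊥ →
      ∀ a : R, a ^ 2 ∈ Module.annihilator R ↥N → a ∈ Module.annihilator R ↥N) :
    ∀ N : Submodule R M, N ≠ ⊥ → (Module.annihilator R ↥N).IsPrime := by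
  intro N hN
  constructor
  · intro htop
    apply hN
    rw [Submodule.eq_bot_iff]
    intro x hx
    have := (ann_iff' N 1).mp (htop ▸ Submodule.mem_top) x hx
    simpa using this
  · intro a b hab
    by_contra hcon
    push_neg at hcon
    obtain ⟨ha, hb⟩ := hcon
    have habN : ∀ x ∈ N, (a * b) • x = 0 := (ann_iff' N _).mp hab
    rcases h (Submodule.map (LinearMap.lsmul R M a) N)
        (Submodule.map (LinearMap.lsmul R M b) N) with ⟨g, hg⟩ | ⟨g, hg⟩
    · apply ha
      apply hsp N hN
      rw [ann_iff']
      intro x hx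
      have hax : a • x ∈ Submodule.map (LinearMap.lsmul R M a) N := ⟨x, hx, rfl⟩
      set y := g ⟨a • x, hax⟩ with hydef
      have hy : a • y = 0 := by
        obtain ⟨z, hz, hzy⟩ := y.2
        apply Subtype.ext
        show a • (y : M) = 0
        rw [← hzy]
        simp only [LinearMap.lsmul_apply, smul_smul]
        exact habN z hz
      have h0 : a • (⟨a • x, hax⟩ : Submodule.map (LinearMap.lsmul R M a) N) = 0 :=
        hg (by rw [map_zero, map_smul, ← hydef]; exact hy)
      have := congrArg Subtype.val h0
      simpa [pow_two, smul_smul] using this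
    · apply hb
      apply hsp N hN
      rw [ann_iff']
      intro x hx
      have hbx : b • x ∈ Submodule.map (LinearMap.lsmul R M b) N := ⟨x, hx, rfl⟩
      set y := g ⟨b • x, hbx⟩ with hydef
      have hy : b • y = 0 := by
        obtain ⟨z, hz, hzy⟩ := y.2
        apply Subtype.ext
        show b • (y : M) = 0
        rw [← hzy]
        simp only [LinearMap.lsmul_apply, smul_smul]
        rw [mul_comm]
        exact habN z hz
      have h0 : b • (⟨b • x, hbx⟩ : Submodule.map (LinearMap.lsmul R M b) N) = 0 :=
        hg (by rw [map_zero, map_smul, ← hydef]; exact hy)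
      have := congrArg Subtype.val h0
      simpa [pow_two, smul_smul] using this
end

section
/- Let M be a weakly uniserial right R-module that contains both a nonzero torsion submodule and a nonzero torsion-free submodule; this is impossible. That is, if R is a domain (or an Ore ring) and M is weakly uniserial, then M cannot contain simultaneously a nonzero submodule K with every element annihilated by some nonzero regular element, and a nonzero submodule N on which every nonzero regular element acts injectively. -/
theorem stmt_16 {R M : Type*} [CommRing R] [IsDomain R] [AddCommGroup M] [Module R M]
    (h : IsWeaklyUniserial R M) :
    ¬ ∃ K N : Submodule R M,
        K ≠ ⊥ ∧ (∀ x ∈ K, ∃ r : R, r ≠ 0 ∧ r • x = 0) ∧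
        N ≠ ⊥ ∧ (∀ (r : R), ∀ x ∈ N, r • x = 0 → r = 0 ∨ x = 0) := by
  rintro ⟨K, N, hK, hKt, hN, hNtf⟩
  obtain ⟨n, hnN, hn⟩ := Submodule.exists_mem_ne_zero_of_ne_bot hN
  obtain ⟨k, hkK, hk⟩ := Submodule.exists_mem_ne_zero_of_ne_bot hK
  rcases h N K with ⟨f, hf⟩ | ⟨f, hf⟩
  · -- f : N ↪ K
    set fn := f ⟨n, hnN⟩
    obtain ⟨r, hr, hrfn⟩ := hKt (fn : M) fn.2
    have : r • fn = 0 := Subtype.ext (by simpa using hrfn)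
    have : f (r • ⟨n, hnN⟩) = 0 := by rw [map_smul]; exact this
    have h2 : r • (⟨n, hnN⟩ : N) = 0 := hf (by simpa using this)
    have h3 : r • n = 0 := congrArg Subtype.val h2
    rcases hNtf r n hnN h3 with h | h
    · exact hr h
    · exact hn h
  · -- f : K ↪ N
    obtain ⟨r, hr, hrk⟩ := hKt k hkK
    have hrk' : r • (⟨k, hkK⟩ : K) = 0 := Subtype.ext (by simpa using hrk)
    have : r • (f ⟨k, hkK⟩ : M) = 0 := by
      have h5 : f (r • ⟨k, hkK⟩) = 0 := by rw [hrk']; exact map_zero f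
      rw [map_smul] at h5
      exact congrArg Subtype.val h5
    rcases hNtf r _ (f ⟨k, hkK⟩).2 this with h | h
    · exact hr h
    · have : f ⟨k, hkK⟩ = 0 := Subtype.ext h
      have h6 : f ⟨k, hkK⟩ = f 0 := by rw [this, map_zero]
      have := hf h6
      exact hk (congrArg Subtype.val this)
end

section
/- Let R be a commutative principal ideal domain and M a finitely generated R-module. Then M is weakly uniserial if and only if M ≅ Rⁿ for some n ≥ 0, or M ≅ (R/pR)ⁿ for some prime element p and n ≥ 0, or M ≅ R/pⁿR for some prime element p and n ≥ 0. -/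
/-!
By the structure theorem, `M ≅ Rⁿ × ∏ᵢ R/(pᵢ^eᵢ)`. Weak uniseriality passes to submodules, so of
any two summands one embeds into the other, and embeddings preserve being killed by an element.
Hence `R` and a nonzero `R/(pᵢ^eᵢ)` are incomparable (`R` has no torsion), so `M` is free or
torsion; two cyclic summands with coprime annihilators are incomparable, so all `pᵢ` are
associated to one prime `q`; and if some `eᵢ ≥ 2` then `R/(q^eᵢ)` is not killed by `q`, while
the `q`-torsion of `R/(q^eᵢ)` is cyclic, so `R/(q^eᵢ)` and the socle `(R/q)^ι` are incomparable
unless there is only one summand. Conversely, submodules of `Rⁿ` are free and compared by rank,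
`(R/p)ⁿ` is a vector space over `R/p`, and the submodules of `R/(pⁿ)` form a chain.
-/

open Function

section Ring

variable {R M N : Type*} [Ring R] [AddCommGroup M] [Module R M] [AddCommGroup N] [Module R N]

theorem exists_injective_congr {A A' B B' : Type*} [AddCommGroup A] [Module R A]
    [AddCommGroup A'] [Module R A'] [AddCommGroup B] [Module R B] [AddCommGroup B'] [Module R B']
    (eA : A ≃ₗ[R] A') (eB : B ≃ₗ[R] B') :
    (∃ f : A →ₗ[R] B, Injective f) → ∃ f : A' →ₗ[R] B', Injective f
  | ⟨f, hf⟩ => ⟨eB.toLinearMap ∘ₗ f ∘ₗ eA.symm.toLinearMap,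
      eB.injective.comp (hf.comp eA.symm.injective)⟩

namespace IsWeaklyUniserial

theorem of_injective (h : IsWeaklyUniserial R M) (f : N →ₗ[R] M) (hf : Injective f) :
    IsWeaklyUniserial R N := fun K L =>
  (h (K.map f) (L.map f)).imp
    (exists_injective_congr (K.equivMapOfInjective f hf).symm (L.equivMapOfInjective f hf).symm)
    (exists_injective_congr (L.equivMapOfInjective f hf).symm (K.equivMapOfInjective f hf).symm)

theorem exists_injective_or (h : IsWeaklyUniserial R M) {A B : Type*} [AddCommGroup A]
    [Module R A] [AddCommGroup B] [Module R B] {f : A →ₗ[R] M} (hf : Injective f)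
    {g : B →ₗ[R] M} (hg : Injective g) :
    (∃ φ : A →ₗ[R] B, Injective φ) ∨ ∃ φ : B →ₗ[R] A, Injective φ :=
  (h (LinearMap.range f) (LinearMap.range g)).imp
    (exists_injective_congr (LinearEquiv.ofInjective f hf).symm
      (LinearEquiv.ofInjective g hg).symm)
    (exists_injective_congr (LinearEquiv.ofInjective g hg).symm
      (LinearEquiv.ofInjective f hf).symm)

theorem of_le_total (h : ∀ N K : Submodule R M, N ≤ K ∨ K ≤ N) : IsWeaklyUniserial R M :=
  fun N K => (h N K).imp (fun hle => ⟨_, Submodule.inclusion_injective hle⟩)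
    (fun hle => ⟨_, Submodule.inclusion_injective hle⟩)

end IsWeaklyUniserial

theorem LinearEquiv.isWeaklyUniserial_iff (e : M ≃ₗ[R] N) :
    IsWeaklyUniserial R M ↔ IsWeaklyUniserial R N :=
  ⟨fun h => h.of_injective e.symm.toLinearMap e.symm.injective,
    fun h => h.of_injective e.toLinearMap e.injective⟩

theorem Module.IsTorsionBy.of_injective {f : M →ₗ[R] N} (hf : Function.Injective f) {a : R}
    (h : Module.IsTorsionBy R N a) : Module.IsTorsionBy R M a :=
  fun x => hf (by rw [map_smul, h, map_zero])

theorem Module.IsTorsionBy.pi {ι : Type*} {φ : ι → Type*} [∀ i, AddCommGroup (φ i)]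
    [∀ i, Module R (φ i)] {a : R} (h : ∀ i, Module.IsTorsionBy R (φ i) a) :
    Module.IsTorsionBy R (∀ i, φ i) a :=
  fun x => funext fun i => @h i (x i)

theorem LinearMap.single_injective {ι : Type*} [DecidableEq ι] {φ : ι → Type*}
    [∀ i, AddCommGroup (φ i)] [∀ i, Module R (φ i)] (i : ι) :
    Injective (LinearMap.single R φ i) :=
  Pi.single_injective i

end Ring

theorem IsWeaklyUniserial.restrictScalars {R S M : Type*} [CommRing R] [Ring S] [Algebra R S]
    [AddCommGroup M] [Module R M] [Module S M] [IsScalarTower R S M]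
    (hS : Surjective (algebraMap R S)) (h : IsWeaklyUniserial S M) : IsWeaklyUniserial R M :=
  fun N K =>
    let e := Submodule.orderIsoOfAlgebraMapSurjective (M := M) hS
    (h (e.symm N) (e.symm K)).imp (fun ⟨f, hf⟩ => ⟨f.restrictScalars R, hf⟩)
      (fun ⟨f, hf⟩ => ⟨f.restrictScalars R, hf⟩)

theorem IsWeaklyUniserial.of_free {R M : Type*} [CommRing R] [IsDomain R]
    [IsPrincipalIdealRing R] [AddCommGroup M] [Module R M] [Module.Free R M]
    [Module.Finite R M] : IsWeaklyUniserial R M := fun N K =>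
  (le_total (Module.rank R N) (Module.rank R K)).imp rank_le_iff_exists_linearMap.mp
    rank_le_iff_exists_linearMap.mp

section CommRing

variable {R : Type*} [CommRing R]

theorem isTorsionBy_quotient_span_singleton_iff {a b : R} :
    Module.IsTorsionBy R (R ⧸ Ideal.span {a}) b ↔ a ∣ b := by
  rw [Module.isTorsionBy_quotient_iff]
  refine ⟨fun h => by simpa [Ideal.mem_span_singleton] using h 1, fun h x => ?_⟩
  exact Ideal.mem_span_singleton.mpr (h.mul_right x)

theorem isTorsionBy_quotient_span_singleton (a : R) :
    Module.IsTorsionBy R (R ⧸ Ideal.span {a}) a :=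
  isTorsionBy_quotient_span_singleton_iff.mpr dvd_rfl

theorem nontrivial_quotient_span_singleton {a : R} (ha : ¬IsUnit a) :
    Nontrivial (R ⧸ Ideal.span {a}) :=
  Ideal.Quotient.nontrivial_iff.mpr (mt Ideal.span_singleton_eq_top.mp ha)

theorem not_injective_quotient_of_isCoprime {a b : R} (hab : IsCoprime a b) (ha : ¬IsUnit a)
    (f : (R ⧸ Ideal.span {a}) →ₗ[R] R ⧸ Ideal.span {b}) : ¬Injective f := by
  intro hf
  have hb := (isTorsionBy_quotient_span_singleton b).of_injective hf
  obtain ⟨u, v, huv⟩ := hab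
  have h1 : Module.IsTorsionBy R (R ⧸ Ideal.span {a}) 1 := fun x => by
    rw [← huv, add_smul, mul_smul, mul_smul, isTorsionBy_quotient_span_singleton a, hb,
      smul_zero, smul_zero, add_zero]
  exact ha (isUnit_of_dvd_one (isTorsionBy_quotient_span_singleton_iff.mp h1))

theorem smul_mk_pow_pred_eq_zero (q : R) (e : ℕ) :
    q • Ideal.Quotient.mk (Ideal.span {q ^ e}) (q ^ (e - 1)) = 0 := by
  rw [Algebra.smul_def, Ideal.Quotient.algebraMap_eq, ← map_mul, Ideal.Quotient.eq_zero_iff_mem,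
    Ideal.mem_span_singleton, ← pow_succ']
  exact pow_dvd_pow q (by omega)

end CommRing

section Domain

variable {R : Type*} [CommRing R] [IsDomain R]

theorem exists_smul_mk_pow_pred_eq {q : R} (hq : q ≠ 0) {e : ℕ}
    {x : R ⧸ Ideal.span {q ^ e}} (hx : q • x = 0) :
    ∃ a : R, a • Ideal.Quotient.mk _ (q ^ (e - 1)) = x := by
  obtain ⟨t, rfl⟩ := Ideal.Quotient.mk_surjective x
  rw [Algebra.smul_def, Ideal.Quotient.algebraMap_eq, ← map_mul, Ideal.Quotient.eq_zero_iff_mem,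
    Ideal.mem_span_singleton] at hx
  suffices q ^ (e - 1) ∣ t by
    obtain ⟨a, rfl⟩ := this
    exact ⟨a, by rw [Algebra.smul_def, Ideal.Quotient.algebraMap_eq, ← map_mul, mul_comm]⟩
  rcases e with _ | k
  · simp
  · simpa [pow_succ', mul_dvd_mul_iff_left hq] using hx

theorem torsionOf_mk_pow_pred {q : R} (hq : q ≠ 0) {e : ℕ} (he : e ≠ 0) :
    Ideal.torsionOf R _ (Ideal.Quotient.mk (Ideal.span {q ^ e}) (q ^ (e - 1))) =
      Ideal.span {q} := by
  obtain ⟨k, rfl⟩ := Nat.exists_eq_succ_of_ne_zero he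
  ext r
  rw [Ideal.mem_torsionOf_iff, Algebra.smul_def, Ideal.Quotient.algebraMap_eq, ← map_mul,
    Ideal.Quotient.eq_zero_iff_mem, Ideal.mem_span_singleton, Ideal.mem_span_singleton,
    Nat.succ_sub_one, pow_succ, mul_comm r, mul_dvd_mul_iff_left (pow_ne_zero k hq)]

theorem exists_injective_quotient_span_to_pow {q : R} (hq : q ≠ 0) {e : ℕ} (he : e ≠ 0) :
    ∃ f : (R ⧸ Ideal.span {q}) →ₗ[R] R ⧸ Ideal.span {q ^ e}, Injective f := by
  set w := Ideal.Quotient.mk (Ideal.span {q ^ e}) (q ^ (e - 1))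
  let φ := (Submodule.quotEquivOfEq _ _ (torsionOf_mk_pow_pred hq he).symm).trans
    (Ideal.quotTorsionOfEquivSpanSingleton R _ w)
  exact ⟨(R ∙ w).subtype ∘ₗ φ.toLinearMap, (R ∙ w).injective_subtype.comp φ.injective⟩

theorem not_injective_pi_to_quotient_span_pow {q : R} (hq : q ≠ 0) (hq' : ¬IsUnit q)
    {ι : Type*} [DecidableEq ι] {i j : ι} (hij : i ≠ j) {e : ℕ}
    (f : (ι → R ⧸ Ideal.span {q}) →ₗ[R] R ⧸ Ideal.span {q ^ e}) : ¬Injective f := by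
  intro hf
  have := nontrivial_quotient_span_singleton hq'
  have hT : Module.IsTorsionBy R (ι → R ⧸ Ideal.span {q}) q :=
    .pi fun _ => isTorsionBy_quotient_span_singleton q
  -- both basis vectors land in the socle `R • q ^ (e - 1)`, so they satisfy a relation over `R`
  obtain ⟨a, ha⟩ := exists_smul_mk_pow_pred_eq hq (x := f (Pi.single i 1))
    (by rw [← map_smul, hT, map_zero])
  obtain ⟨b, hb⟩ := exists_smul_mk_pow_pred_eq hq (x := f (Pi.single j 1))
    (by rw [← map_smul, hT, map_zero])
  have hba : b • Pi.single i 1 = a • (Pi.single j 1 : ι → R ⧸ Ideal.span {q}) :=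
    hf (by rw [map_smul, map_smul, ← ha, ← hb, smul_smul, smul_smul, mul_comm])
  have hqa : q ∣ a := by
    have := congr_fun hba j
    simp only [Pi.smul_apply, Pi.single_eq_same, Pi.single_eq_of_ne hij.symm, smul_zero] at this
    rwa [eq_comm, Algebra.smul_def, mul_one, Ideal.Quotient.algebraMap_eq,
      Ideal.Quotient.eq_zero_iff_mem, Ideal.mem_span_singleton] at this
  have hfi : f (Pi.single i 1) = 0 := by
    obtain ⟨c, rfl⟩ := hqa
    rw [← ha, mul_comm, mul_smul, smul_mk_pow_pred_eq_zero, smul_zero]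
  exact (one_ne_zero : (1 : R ⧸ Ideal.span {q}) ≠ 0)
    (by simpa using congr_fun (hf (hfi.trans (map_zero f).symm)) i)

namespace IsWeaklyUniserial

theorem eq_zero_of_smul_eq_zero {M : Type*} [AddCommGroup M] [Module R M]
    (h : IsWeaklyUniserial R M) {f : R →ₗ[R] M} (hf : Injective f) {s : R} (hs : s ≠ 0)
    {x : M} (hx : s • x = 0) : x = 0 := by
  rcases h.exists_injective_or hf (Submodule.torsionBy R M s).injective_subtype with
    ⟨φ, hφ⟩ | ⟨φ, hφ⟩
  · have := (Submodule.torsionBy_isTorsionBy s).of_injective hφ (x := 1)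
    exact absurd (by simpa using this) hs
  · have hφx : s • φ ⟨x, (Submodule.mem_torsionBy_iff s x).mpr hx⟩ = 0 := by
      rw [← map_smul, ← map_zero φ]
      exact congrArg φ (Subtype.ext hx)
    have := hφ ((smul_eq_zero.mp hφx).resolve_left hs |>.trans (map_zero φ).symm)
    exact congrArg Subtype.val this

theorem eq_zero_of_prod_of_smul_eq_zero {n : ℕ} {T : Type*} [AddCommGroup T] [Module R T]
    (h : IsWeaklyUniserial R ((Fin n → R) × T)) {s : R} (hs : s ≠ 0) {x : T} (hx0 : x ≠ 0)
    (hx : s • x = 0) : n = 0 := by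
  by_contra hn
  let i : Fin n := ⟨0, by omega⟩
  have hf : Injective (LinearMap.inl R _ T ∘ₗ LinearMap.single R (fun _ => R) i) :=
    LinearMap.inl_injective.comp (LinearMap.single_injective i)
  exact hx0 (congrArg Prod.snd (h.eq_zero_of_smul_eq_zero hf hs (x := (0, x)) (by simp [hx])))

theorem subsingleton_of_pi_of_two_le {ι : Type*} {q : R} {e : ι → ℕ}
    (h : IsWeaklyUniserial R (∀ i, R ⧸ Ideal.span {q ^ e i})) (hq : Prime q)
    (he : ∀ i, e i ≠ 0) {i : ι} (hi : 2 ≤ e i) : Subsingleton ι := by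
  classical
  choose g hg using fun k => exists_injective_quotient_span_to_pow hq.ne_zero (he k)
  rcases h.exists_injective_or (LinearMap.single_injective i) (g := LinearMap.piMap g)
      (Injective.piMap hg) with ⟨φ, hφ⟩ | ⟨φ, hφ⟩
  · have hdvd := isTorsionBy_quotient_span_singleton_iff.mp
      ((Module.IsTorsionBy.pi fun _ => isTorsionBy_quotient_span_singleton q).of_injective hφ)
    have := (pow_dvd_pow_iff hq.ne_zero hq.not_isUnit (n := e i) (m := 1)).mp
      (by rwa [pow_one])
    omega
  · exact ⟨fun j k => by_contra fun hjk =>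
      not_injective_pi_to_quotient_span_pow hq.ne_zero hq.not_isUnit hjk φ hφ⟩

end IsWeaklyUniserial

end Domain

section PID

variable {R : Type*} [CommRing R] [IsDomain R] [IsPrincipalIdealRing R]

theorem Ideal.le_total_of_prime_pow_mem {p : R} (hp : Prime p) {n : ℕ} {I J : Ideal R}
    (hI : p ^ n ∈ I) (hJ : p ^ n ∈ J) : I ≤ J ∨ J ≤ I := by
  obtain ⟨a, rfl⟩ := (IsPrincipalIdealRing.principal I).principal
  obtain ⟨b, rfl⟩ := (IsPrincipalIdealRing.principal J).principal
  simp only [Ideal.submodule_span_eq, Ideal.mem_span_singleton] at hI hJ ⊢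
  obtain ⟨i, -, hi⟩ := (dvd_prime_pow hp n).mp hI
  obtain ⟨j, -, hj⟩ := (dvd_prime_pow hp n).mp hJ
  simp only [Ideal.span_singleton_le_span_singleton, hi.dvd_iff_dvd_left, hj.dvd_iff_dvd_left,
    hi.dvd_iff_dvd_right, hj.dvd_iff_dvd_right]
  exact (le_total j i).imp (pow_dvd_pow p) (pow_dvd_pow p)

theorem isWeaklyUniserial_quotient_span_prime_pow {p : R} (hp : Prime p) (n : ℕ) :
    IsWeaklyUniserial R (R ⧸ Ideal.span {p ^ n}) := by
  refine .of_le_total fun N K => ?_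
  have hmem (L : Submodule R (R ⧸ Ideal.span {p ^ n})) : p ^ n ∈ L.comap (Submodule.mkQ _) := by
    simp
  simpa only [Submodule.comap_le_comap_iff_of_surjective (Submodule.mkQ_surjective _)] using
    Ideal.le_total_of_prime_pow_mem hp (hmem N) (hmem K)

theorem isWeaklyUniserial_pi_quotient_span_prime {p : R} (hp : Prime p) (n : ℕ) :
    IsWeaklyUniserial R (Fin n → R ⧸ Ideal.span {p}) :=
  have : (Ideal.span {p}).IsMaximal := PrincipalIdealRing.isMaximal_of_irreducible hp.irreducible
  letI := Ideal.Quotient.field (Ideal.span {p})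
  .restrictScalars (S := R ⧸ Ideal.span {p}) Ideal.Quotient.mk_surjective .of_free

namespace IsWeaklyUniserial

theorem associated_of_pi {ι : Type*} {p : ι → R} {e : ι → ℕ}
    (h : IsWeaklyUniserial R (∀ i, R ⧸ Ideal.span {p i ^ e i})) (hp : ∀ i, Prime (p i))
    (he : ∀ i, e i ≠ 0) (i j : ι) : Associated (p i) (p j) := by
  classical
  by_contra hij
  have hco : IsCoprime (p i) (p j) := (hp i).irreducible.coprime_iff_not_dvd.mpr
    (mt ((hp i).dvd_prime_iff_associated (hp j)).mp hij)
  have hu (k : ι) : ¬IsUnit (p k ^ e k) := fun hu =>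
    (hp k).not_isUnit ((isUnit_pow_iff (he k)).mp hu)
  rcases h.exists_injective_or (LinearMap.single_injective i) (LinearMap.single_injective j) with
    ⟨φ, hφ⟩ | ⟨φ, hφ⟩
  · exact not_injective_quotient_of_isCoprime hco.pow (hu i) φ hφ
  · exact not_injective_quotient_of_isCoprime hco.symm.pow (hu j) φ hφ

theorem elementary_or_cyclic {M : Type*} [AddCommGroup M] [Module R M]
    (h : IsWeaklyUniserial R M) {ι : Type*} [Fintype ι] {p : ι → R} {e : ι → ℕ}
    (φ : M ≃ₗ[R] ∀ i, R ⧸ Ideal.span {p i ^ e i}) (hp : ∀ i, Prime (p i))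
    (he : ∀ i, e i ≠ 0) (i₀ : ι) :
    (∃ (q : R) (n : ℕ), Prime q ∧ Nonempty (M ≃ₗ[R] (Fin n → R ⧸ Ideal.span {q}))) ∨
      ∃ (q : R) (n : ℕ), Prime q ∧ Nonempty (M ≃ₗ[R] (R ⧸ Ideal.span {q ^ n})) := by
  have hassoc := (φ.isWeaklyUniserial_iff.mp h).associated_of_pi hp he
  let ψ : M ≃ₗ[R] ∀ i, R ⧸ Ideal.span {p i₀ ^ e i} := φ.trans <| .piCongrRight fun i =>
    Submodule.quotEquivOfEq _ _ <|
      Ideal.span_singleton_eq_span_singleton.mpr (hassoc i i₀).pow_pow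
  by_cases h2 : ∃ i, 2 ≤ e i
  · obtain ⟨i, hi⟩ := h2
    have := (ψ.isWeaklyUniserial_iff.mp h).subsingleton_of_pi_of_two_le (hp i₀) he hi
    let := uniqueOfSubsingleton i
    exact Or.inr ⟨p i₀, e i, hp i₀, ⟨ψ.trans (LinearEquiv.piUnique R _)⟩⟩
  · have he1 (i : ι) : e i = 1 := by have := not_exists.mp h2 i; have := he i; omega
    let χ : (∀ i, R ⧸ Ideal.span {p i₀ ^ e i}) ≃ₗ[R] (ι → R ⧸ Ideal.span {p i₀}) :=
      .piCongrRight fun i => Submodule.quotEquivOfEq _ _ (by rw [he1 i, pow_one])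
    exact Or.inl ⟨p i₀, Fintype.card ι, hp i₀,
      ⟨ψ.trans (χ.trans (.funCongrLeft R _ (Fintype.equivFin ι).symm))⟩⟩

end IsWeaklyUniserial

end PID

def LinearEquiv.piRestrictOfSubsingleton {R : Type*} [Semiring R] {ι : Type*} {φ : ι → Type*}
    [∀ i, AddCommMonoid (φ i)] [∀ i, Module R (φ i)] (P : ι → Prop) [DecidablePred P]
    (hφ : ∀ i, ¬P i → Subsingleton (φ i)) : (∀ i, φ i) ≃ₗ[R] ∀ i : {i // P i}, φ i where
  toFun x i := x i
  map_add' _ _ := rfl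
  map_smul' _ _ := rfl
  invFun x i := if hi : P i then x ⟨i, hi⟩ else 0
  left_inv x := funext fun i => by
    by_cases hi : P i
    · simp [hi]
    · exact (hφ i hi).elim _ _
  right_inv x := funext fun i => by simp [i.2]

universe u v

theorem Module.exists_equiv_prod_pi_quotient_prime_pow (R : Type u) (M : Type v) [CommRing R]
    [IsDomain R] [IsPrincipalIdealRing R] [AddCommGroup M] [Module R M] [Module.Finite R M] :
    ∃ (n : ℕ) (ι : Type u) (_ : Fintype ι) (p : ι → R) (e : ι → ℕ),
      (∀ i, Prime (p i)) ∧ (∀ i, e i ≠ 0) ∧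
      Nonempty (M ≃ₗ[R] (Fin n → R) × ∀ i, R ⧸ Ideal.span {p i ^ e i}) := by
  classical
  obtain ⟨n, ι, _, p, hp, e, ⟨φ⟩⟩ := Module.equiv_free_prod_directSum R M
  have hφ (i : ι) (hi : ¬e i ≠ 0) : Subsingleton (R ⧸ Ideal.span {p i ^ e i}) := by
    rw [not_not.mp hi, pow_zero, Ideal.span_singleton_one]
    infer_instance
  exact ⟨n, {i // e i ≠ 0}, inferInstance, fun i => p i, fun i => e i, fun i => (hp i).prime,
    fun i => i.2, ⟨φ.trans <| (Finsupp.linearEquivFunOnFinite R R _).prodCongr <|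
      (DirectSum.linearEquivFunOnFintype R ι _).trans (.piRestrictOfSubsingleton _ hφ)⟩⟩

theorem stmt_17 {R M : Type*} [CommRing R] [IsDomain R] [IsPrincipalIdealRing R]
    [AddCommGroup M] [Module R M] [Module.Finite R M] :
    IsWeaklyUniserial R M ↔
      (∃ n : ℕ, Nonempty (M ≃ₗ[R] (Fin n → R))) ∨
      (∃ (p : R) (n : ℕ), Prime p ∧
        Nonempty (M ≃ₗ[R] (Fin n → R ⧸ Ideal.span {p}))) ∨
      (∃ (p : R) (n : ℕ), Prime p ∧
        Nonempty (M ≃ₗ[R] (R ⧸ Ideal.span {p ^ n}))) := by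
  refine ⟨fun h => ?_, ?_⟩
  · obtain ⟨n, ι, _, p, e, hp, he, ⟨φ⟩⟩ := Module.exists_equiv_prod_pi_quotient_prime_pow R M
    rcases isEmpty_or_nonempty ι with hι | ⟨⟨i₀⟩⟩
    · exact Or.inl ⟨n, ⟨φ.trans LinearEquiv.prodUnique⟩⟩
    classical
    have := nontrivial_quotient_span_singleton fun hu =>
      (hp i₀).not_isUnit ((isUnit_pow_iff (he i₀)).mp hu)
    obtain rfl : n = 0 := (φ.isWeaklyUniserial_iff.mp h).eq_zero_of_prod_of_smul_eq_zero
      (pow_ne_zero _ (hp i₀).ne_zero) (x := Pi.single i₀ 1) (by simp)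
      (by rw [← Pi.single_smul, isTorsionBy_quotient_span_singleton, Pi.single_zero])
    exact Or.inr (h.elementary_or_cyclic (φ.trans LinearEquiv.uniqueProd) hp he i₀)
  · rintro (⟨n, ⟨φ⟩⟩ | ⟨p, n, hp, ⟨φ⟩⟩ | ⟨p, n, hp, ⟨φ⟩⟩)
    · exact φ.isWeaklyUniserial_iff.mpr .of_free
    · exact φ.isWeaklyUniserial_iff.mpr (isWeaklyUniserial_pi_quotient_span_prime hp n)
    · exact φ.isWeaklyUniserial_iff.mpr (isWeaklyUniserial_quotient_span_prime_pow hp n)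
end

section
/- If M is a finite abelian group (finite ℤ-module) that is weakly uniserial, then the order of M is a prime power: |M| = p^α for some prime p and integer α ≥ 0. -/
lemma embed_span_eq {M : Type*} [AddCommGroup M] {p q : ℕ} (hp : p.Prime) (hq : q.Prime)
    {x y : M} (hx : addOrderOf x = p) (hy : addOrderOf y = q)
    (f : (Submodule.span ℤ {x} : Submodule ℤ M) →ₗ[ℤ] (Submodule.span ℤ {y} : Submodule ℤ M))
    (hf : Function.Injective f) : p = q := by
  have hxN : x ∈ Submodule.span ℤ {x} := Submodule.mem_span_singleton_self x
  let xN : (Submodule.span ℤ {x} : Submodule ℤ M) := ⟨x, hxN⟩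
  have h1 : addOrderOf xN = p := by
    rw [← hx]
    exact (addOrderOf_injective (Submodule.span ℤ {x}).subtype.toAddMonoidHom Subtype.val_injective xN).symm
  have h2 : addOrderOf (f xN) = p := by
    rw [← h1]
    exact addOrderOf_injective f.toAddMonoidHom (by rw [LinearMap.toAddMonoidHom_coe]; exact hf) xN
  have h3 : addOrderOf ((f xN : M)) = p := by
    rw [← h2]
    exact addOrderOf_injective (Submodule.span ℤ {y}).subtype.toAddMonoidHom Subtype.val_injective (f xN)
  obtain ⟨c, hc⟩ := Submodule.mem_span_singleton.mp (f xN).2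
  have hdvd : p ∣ q := by
    rw [← h3, ← hc]
    apply addOrderOf_dvd_of_nsmul_eq_zero
    have : (q : ℕ) • y = 0 := by rw [← hy]; exact addOrderOf_nsmul_eq_zero y
    rw [smul_comm, this, smul_zero]
  exact (Nat.prime_dvd_prime_iff_eq hp hq).mp hdvd

theorem stmt_19 {M : Type*} [AddCommGroup M] [Finite M]
    (h : IsWeaklyUniserial ℤ M) :
    ∃ (p α : ℕ), p.Prime ∧ Nat.card M = p ^ α := by
  letI : Fintype M := Fintype.ofFinite M
  rcases subsingleton_or_nontrivial M with hs | hn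
  · exact ⟨2, 0, Nat.prime_two, Nat.card_eq_one_iff_unique.mpr ⟨hs, ⟨0⟩⟩⟩
  · have hn0 : Nat.card M ≠ 0 := Nat.card_pos.ne'
    have hn1 : Nat.card M ≠ 1 := fun h1 =>
      (not_subsingleton M) (Nat.card_eq_one_iff_unique.mp h1).1
    have hp : (Nat.card M).minFac.Prime := Nat.minFac_prime hn1
    refine ⟨(Nat.card M).minFac, (Nat.card M).primeFactorsList.length, hp,
      Nat.eq_prime_pow_of_unique_prime_dvd hn0 ?_⟩
    intro q hq hqn
    haveI : Fact q.Prime := ⟨hq⟩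
    haveI : Fact (Nat.card M).minFac.Prime := ⟨hp⟩
    obtain ⟨y, hy⟩ := exists_prime_addOrderOf_dvd_card (G := M) q
      (by rwa [← Nat.card_eq_fintype_card])
    obtain ⟨x, hx⟩ := exists_prime_addOrderOf_dvd_card (G := M) (Nat.card M).minFac
      (by rw [← Nat.card_eq_fintype_card]; exact Nat.minFac_dvd _)
    rcases h (Submodule.span ℤ {x}) (Submodule.span ℤ {y}) with ⟨f, hf⟩ | ⟨f, hf⟩
    · exact (embed_span_eq hp hq hx hy f hf).symm
    · exact embed_span_eq hq hp hy hx f hf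
end
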